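/- arXiv:1605.08370 — 2 statements merged into one kernel-verified Lean document; each statement's English description precedes it below -/
import Mathlib

section
/- Let M = X S Xᵀ be a rank-k symmetric PSD matrix in R^{d×d} with X ∈ R^{d×k} having orthonormal columns. If U ∈ R^{d×k} satisfies ||M - U Uᵀ||_F ≤ σ_k(M)/10, then σ_min(Xᵀ U)² ≥ σ_k(M)/2. -/
open Matrix

noncomputable def frob {m n : ℕ} (A : Matrix (Fin m) (Fin n) ℝ) : ℝ :=
  Real.sqrt (∑ i, ∑ j, (A i j)^2)

noncomputable def spec {m n : ℕ} (A : Matrix (Fin m) (Fin n) ℝ) : ℝ :=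
  ‖LinearMap.toContinuousLinearMap (Matrix.toEuclideanLin A)‖

noncomputable def sigmaMin {m n : ℕ} (A : Matrix (Fin m) (Fin n) ℝ) : ℝ :=
  sInf {c | ∃ x : EuclideanSpace ℝ (Fin n), ‖x‖ = 1 ∧ c = ‖Matrix.toEuclideanLin A x‖}

lemma sumsq_eq_dot {n : ℕ} (v : Fin n → ℝ) : ∑ i, v i ^ 2 = v ⬝ᵥ v := by
  simp [dotProduct, sq]

lemma dot_le_sqrt_mul_sqrt {n : ℕ} (v w : Fin n → ℝ) :
    v ⬝ᵥ w ≤ Real.sqrt (∑ i, v i ^ 2) * Real.sqrt (∑ i, w i ^ 2) := by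
  have h := Finset.sum_mul_sq_le_sq_mul_sq Finset.univ v w
  calc v ⬝ᵥ w ≤ Real.sqrt ((v ⬝ᵥ w) ^ 2) := by
        rw [Real.sqrt_sq_eq_abs]; exact le_abs_self _
    _ ≤ Real.sqrt ((∑ i, v i ^ 2) * (∑ i, w i ^ 2)) := by
        apply Real.sqrt_le_sqrt
        simpa [dotProduct] using h
    _ = _ := Real.sqrt_mul (by positivity) _

/-- Quadratic form bound by Frobenius norm. -/
lemma quad_le_frob {n : ℕ} (E : Matrix (Fin n) (Fin n) ℝ) (w : Fin n → ℝ) :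
    w ⬝ᵥ E *ᵥ w ≤ frob E * ∑ i, w i ^ 2 := by
  have key : w ⬝ᵥ E *ᵥ w = ∑ p : Fin n × Fin n, E p.1 p.2 * (w p.1 * w p.2) := by
    rw [Fintype.sum_prod_type]
    simp only [dotProduct, mulVec, Finset.mul_sum]
    exact Finset.sum_congr rfl fun i _ => Finset.sum_congr rfl fun j _ => by ring
  have h := Finset.sum_mul_sq_le_sq_mul_sq Finset.univ
    (fun p : Fin n × Fin n => E p.1 p.2) (fun p : Fin n × Fin n => w p.1 * w p.2)
  have hf : ∑ p : Fin n × Fin n, E p.1 p.2 ^ 2 = ∑ i, ∑ j, (E i j) ^ 2 :=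
    Fintype.sum_prod_type _
  have hg : ∑ p : Fin n × Fin n, (w p.1 * w p.2) ^ 2 = (∑ i, w i ^ 2) ^ 2 := by
    rw [Fintype.sum_prod_type, sq (∑ i, w i ^ 2), Finset.sum_mul_sum]
    exact Finset.sum_congr rfl fun i _ => Finset.sum_congr rfl fun j _ => by ring
  have hsum : 0 ≤ ∑ i, w i ^ 2 := Finset.sum_nonneg fun i _ => sq_nonneg _
  calc w ⬝ᵥ E *ᵥ w
      = ∑ p : Fin n × Fin n, E p.1 p.2 * (w p.1 * w p.2) := key
    _ ≤ Real.sqrt ((∑ p : Fin n × Fin n, E p.1 p.2 ^ 2) *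
          (∑ p : Fin n × Fin n, (w p.1 * w p.2) ^ 2)) := by
        calc ∑ p : Fin n × Fin n, E p.1 p.2 * (w p.1 * w p.2)
            ≤ Real.sqrt ((∑ p : Fin n × Fin n, E p.1 p.2 * (w p.1 * w p.2)) ^ 2) := by
              rw [Real.sqrt_sq_eq_abs]; exact le_abs_self _
          _ ≤ _ := Real.sqrt_le_sqrt h
    _ = Real.sqrt (∑ p : Fin n × Fin n, E p.1 p.2 ^ 2) *
          Real.sqrt (∑ p : Fin n × Fin n, (w p.1 * w p.2) ^ 2) :=
        Real.sqrt_mul (by positivity) _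
    _ = frob E * ∑ i, w i ^ 2 := by
        rw [hf, hg, frob, Real.sqrt_sq hsum]

/-- In the local region, σ_min(Xᵀ U)² ≥ σ_k(M)/2. -/
theorem local_angle_bound_psd {d k : ℕ} (hk : 0 < k)
    (X : Matrix (Fin d) (Fin k) ℝ) (S : Fin k → ℝ)
    (hX : Xᵀ * X = 1) (hS : ∀ i, 0 < S i)
    (M : Matrix (Fin d) (Fin d) ℝ) (hM : M = X * Matrix.diagonal S * Xᵀ)
    (U : Matrix (Fin d) (Fin k) ℝ)
    (hU : frob (M - U * Uᵀ) ≤ (⨅ i, S i) / 10) :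
    (⨅ i, S i) / 2 ≤ (sigmaMin (Xᵀ * U))^2 := by
  have hne : Nonempty (Fin k) := ⟨⟨0, hk⟩⟩
  set σ : ℝ := ⨅ i, S i with hσ
  have hbdd : BddBelow (Set.range S) := (Set.finite_range S).bddBelow
  have hσle : ∀ i, σ ≤ S i := fun i => ciInf_le hbdd i
  have hσpos : 0 < σ := by
    obtain ⟨i0, hi0⟩ := Finite.exists_min S
    have : σ = S i0 := le_antisymm (hσle i0) (le_ciInf hi0)
    rw [this]; exact hS i0
  set E : Matrix (Fin d) (Fin d) ℝ := M - U * Uᵀ with hE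
  have hfrobnn : 0 ≤ frob E := Real.sqrt_nonneg _
  set B : Matrix (Fin k) (Fin k) ℝ := Uᵀ * X with hB
  have hBt : Bᵀ = Xᵀ * U := by rw [hB, transpose_mul, transpose_transpose]
  -- Xᵀ M X = diagonal S
  have hXMX : Xᵀ * M * X = Matrix.diagonal S := by
    rw [hM]
    calc Xᵀ * (X * Matrix.diagonal S * Xᵀ) * X
        = (Xᵀ * X) * Matrix.diagonal S * (Xᵀ * X) := by
          simp only [Matrix.mul_assoc]
      _ = Matrix.diagonal S := by rw [hX, Matrix.one_mul, Matrix.mul_one]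
  have hBtB : Bᵀ * B = Matrix.diagonal S - Xᵀ * E * X := by
    rw [hBt, hB, hE, Matrix.mul_sub, Matrix.sub_mul, hXMX, sub_sub_cancel]
    simp only [Matrix.mul_assoc]
  -- norms of X *ᵥ y
  have hXy : ∀ y : Fin k → ℝ, ∑ i, (X *ᵥ y) i ^ 2 = ∑ i, y i ^ 2 := by
    intro y
    rw [sumsq_eq_dot, sumsq_eq_dot]
    calc (X *ᵥ y) ⬝ᵥ (X *ᵥ y) = (X *ᵥ y) ᵥ* X ⬝ᵥ y := dotProduct_mulVec _ _ _
      _ = (Xᵀ *ᵥ (X *ᵥ y)) ⬝ᵥ y := by rw [mulVec_transpose]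
      _ = ((Xᵀ * X) *ᵥ y) ⬝ᵥ y := by rw [mulVec_mulVec]
      _ = y ⬝ᵥ y := by rw [hX, one_mulVec]
  -- the key lower bound on ‖B y‖²
  have hBlow : ∀ y : Fin k → ℝ, σ / 2 * (∑ i, y i ^ 2) ≤ ∑ i, (B *ᵥ y) i ^ 2 := by
    intro y
    have hsnn : (0 : ℝ) ≤ ∑ i, y i ^ 2 := Finset.sum_nonneg fun i _ => sq_nonneg _
    have e1 : ∑ i, (B *ᵥ y) i ^ 2
        = ((Matrix.diagonal S) *ᵥ y) ⬝ᵥ y - ((Xᵀ * E * X) *ᵥ y) ⬝ᵥ y := by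
      rw [sumsq_eq_dot]
      calc (B *ᵥ y) ⬝ᵥ (B *ᵥ y) = (B *ᵥ y) ᵥ* B ⬝ᵥ y := dotProduct_mulVec _ _ _
        _ = (Bᵀ *ᵥ (B *ᵥ y)) ⬝ᵥ y := by rw [mulVec_transpose]
        _ = ((Bᵀ * B) *ᵥ y) ⬝ᵥ y := by rw [mulVec_mulVec]
        _ = _ := by rw [hBtB, sub_mulVec, sub_dotProduct]
    have e2 : σ * (∑ i, y i ^ 2) ≤ ((Matrix.diagonal S) *ᵥ y) ⬝ᵥ y := by
      have : ((Matrix.diagonal S) *ᵥ y) ⬝ᵥ y = ∑ i, S i * y i ^ 2 := by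
        simp [dotProduct, mulVec_diagonal, sq, mul_assoc]
      rw [this, Finset.mul_sum]
      apply Finset.sum_le_sum
      intro i _
      exact mul_le_mul_of_nonneg_right (hσle i) (sq_nonneg _)
    have e3 : ((Xᵀ * E * X) *ᵥ y) ⬝ᵥ y ≤ σ / 10 * (∑ i, y i ^ 2) := by
      have h1 : ((Xᵀ * E * X) *ᵥ y) ⬝ᵥ y = (X *ᵥ y) ⬝ᵥ E *ᵥ (X *ᵥ y) := by
        calc ((Xᵀ * E * X) *ᵥ y) ⬝ᵥ y = (Xᵀ *ᵥ ((E * X) *ᵥ y)) ⬝ᵥ y := by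
              rw [mulVec_mulVec, Matrix.mul_assoc]
          _ = ((E * X) *ᵥ y) ᵥ* X ⬝ᵥ y := by rw [mulVec_transpose]
          _ = ((E * X) *ᵥ y) ⬝ᵥ (X *ᵥ y) := (dotProduct_mulVec _ _ _).symm
          _ = (E *ᵥ (X *ᵥ y)) ⬝ᵥ (X *ᵥ y) := by rw [mulVec_mulVec]
          _ = (X *ᵥ y) ⬝ᵥ E *ᵥ (X *ᵥ y) := dotProduct_comm _ _
      rw [h1]
      calc (X *ᵥ y) ⬝ᵥ E *ᵥ (X *ᵥ y) ≤ frob E * ∑ i, (X *ᵥ y) i ^ 2 :=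
            quad_le_frob E (X *ᵥ y)
        _ = frob E * ∑ i, y i ^ 2 := by rw [hXy]
        _ ≤ σ / 10 * (∑ i, y i ^ 2) := mul_le_mul_of_nonneg_right hU hsnn
    have e4 : 0 ≤ σ * (∑ i, y i ^ 2) := mul_nonneg hσpos.le hsnn
    linarith
  -- B is invertible, so B *ᵥ · is surjective
  have hker : ∀ y : Fin k → ℝ, B *ᵥ y = 0 → y = 0 := by
    intro y hy
    have h0 : σ / 2 * (∑ i, y i ^ 2) ≤ 0 := by
      have := hBlow y
      rw [hy] at this
      simpa using this
    have hsnn : (0 : ℝ) ≤ ∑ i, y i ^ 2 := Finset.sum_nonneg fun i _ => sq_nonneg _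
    have hs0 : ∑ i, y i ^ 2 = 0 := by nlinarith
    funext i
    have := (Finset.sum_eq_zero_iff_of_nonneg (fun i _ => sq_nonneg (y i))).mp hs0 i
      (Finset.mem_univ i)
    exact pow_eq_zero_iff (by norm_num) |>.mp this
  have hinj : Function.Injective B.mulVec := by
    intro y1 y2 h
    have h0 : B *ᵥ (y1 - y2) = 0 := by rw [Matrix.mulVec_sub, h, sub_self]
    exact sub_eq_zero.mp (hker _ h0)
  have hsurj : Function.Surjective B.mulVec :=
    Matrix.mulVec_surjective_iff_isUnit.mpr (Matrix.mulVec_injective_iff_isUnit.mp hinj)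
  -- lower bound for Xᵀ U = Bᵀ
  have hAlow : ∀ x : Fin k → ℝ, σ / 2 * (∑ i, x i ^ 2) ≤ ∑ i, ((Xᵀ * U) *ᵥ x) i ^ 2 := by
    intro x
    obtain ⟨y, hy⟩ := hsurj x
    have hsnn : (0 : ℝ) ≤ ∑ i, x i ^ 2 := Finset.sum_nonneg fun i _ => sq_nonneg _
    have htnn : (0 : ℝ) ≤ ∑ i, y i ^ 2 := Finset.sum_nonneg fun i _ => sq_nonneg _
    have hrnn : (0 : ℝ) ≤ ∑ i, ((Xᵀ * U) *ᵥ x) i ^ 2 :=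
      Finset.sum_nonneg fun i _ => sq_nonneg _
    have h1 : ∑ i, x i ^ 2 = y ⬝ᵥ ((Xᵀ * U) *ᵥ x) := by
      rw [sumsq_eq_dot]
      calc x ⬝ᵥ x = x ⬝ᵥ (B *ᵥ y) := by rw [hy]
        _ = x ᵥ* B ⬝ᵥ y := dotProduct_mulVec _ _ _
        _ = (Bᵀ *ᵥ x) ⬝ᵥ y := by rw [mulVec_transpose]
        _ = y ⬝ᵥ (Bᵀ *ᵥ x) := dotProduct_comm _ _
        _ = y ⬝ᵥ ((Xᵀ * U) *ᵥ x) := by rw [hBt]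
    have h2 : y ⬝ᵥ ((Xᵀ * U) *ᵥ x)
        ≤ Real.sqrt (∑ i, y i ^ 2) * Real.sqrt (∑ i, ((Xᵀ * U) *ᵥ x) i ^ 2) :=
      dot_le_sqrt_mul_sqrt _ _
    have h3 : σ / 2 * (∑ i, y i ^ 2) ≤ ∑ i, x i ^ 2 := by
      have := hBlow y
      rwa [hy] at this
    -- (∑x²)² ≤ (∑y²)(∑z²)
    have h4 : (∑ i, x i ^ 2) ^ 2 ≤ (∑ i, y i ^ 2) * (∑ i, ((Xᵀ * U) *ᵥ x) i ^ 2) := by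
      calc (∑ i, x i ^ 2) ^ 2
          ≤ (Real.sqrt (∑ i, y i ^ 2) * Real.sqrt (∑ i, ((Xᵀ * U) *ᵥ x) i ^ 2)) ^ 2 := by
            apply pow_le_pow_left₀ hsnn
            rw [h1]; exact h2
        _ = (∑ i, y i ^ 2) * (∑ i, ((Xᵀ * U) *ᵥ x) i ^ 2) := by
            rw [mul_pow, Real.sq_sqrt htnn, Real.sq_sqrt hrnn]
    rcases eq_or_lt_of_le hsnn with h0 | h0
    · rw [← h0]
      simpa using hrnn
    · have key : σ / 2 * (∑ i, x i ^ 2) * (∑ i, x i ^ 2)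
          ≤ (∑ i, ((Xᵀ * U) *ᵥ x) i ^ 2) * (∑ i, x i ^ 2) := by
        have ha := mul_le_mul_of_nonneg_left h4 (by positivity : (0:ℝ) ≤ σ / 2)
        have hb := mul_le_mul_of_nonneg_right h3 hrnn
        nlinarith
      exact le_of_mul_le_mul_right key h0
  -- translate to EuclideanSpace norms
  have hAx : ∀ x : EuclideanSpace ℝ (Fin k), ‖x‖ = 1 →
      Real.sqrt (σ / 2) ≤ ‖Matrix.toEuclideanLin (Xᵀ * U) x‖ := by
    intro x hx
    have hs1 : ∑ i, (x i) ^ 2 = 1 := by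
      have h := EuclideanSpace.norm_eq x
      rw [hx] at h
      have h2 : Real.sqrt (∑ i, ‖x i‖ ^ 2) = 1 := h.symm
      have h3 : ∑ i, ‖x i‖ ^ 2 = 1 := by
        have h4 : Real.sqrt (∑ i, ‖x i‖ ^ 2) ^ 2 = 1 := by rw [h2]; norm_num
        rwa [Real.sq_sqrt (Finset.sum_nonneg fun i _ => sq_nonneg ‖x i‖)] at h4
      simpa [Real.norm_eq_abs, sq_abs] using h3
    have hnorm : ‖Matrix.toEuclideanLin (Xᵀ * U) x‖
        = Real.sqrt (∑ i, ((Xᵀ * U) *ᵥ (fun i => x i)) i ^ 2) := by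
      rw [EuclideanSpace.norm_eq]
      congr 1
      apply Finset.sum_congr rfl
      intro i _
      rw [Real.norm_eq_abs, sq_abs]
      rfl
    rw [hnorm]
    apply Real.sqrt_le_sqrt
    have := hAlow (fun i => x i)
    rw [hs1, mul_one] at this
    exact this
  -- conclude via sInf
  set T := {c | ∃ x : EuclideanSpace ℝ (Fin k), ‖x‖ = 1 ∧
      c = ‖Matrix.toEuclideanLin (Xᵀ * U) x‖} with hT
  have hTne : T.Nonempty := by
    refine ⟨‖Matrix.toEuclideanLin (Xᵀ * U) (EuclideanSpace.single ⟨0, hk⟩ (1:ℝ))‖,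
      EuclideanSpace.single ⟨0, hk⟩ (1:ℝ), ?_, rfl⟩
    rw [EuclideanSpace.norm_single]
    norm_num
  have hlb : Real.sqrt (σ / 2) ≤ sigmaMin (Xᵀ * U) := by
    apply le_csInf hTne
    rintro c ⟨x, hx, rfl⟩
    exact hAx x hx
  have hfin := pow_le_pow_left₀ (Real.sqrt_nonneg (σ / 2)) hlb 2
  rwa [Real.sq_sqrt (by positivity : (0:ℝ) ≤ σ / 2)] at hfin
end

section
/- Let M ∈ R^{d₁×d₂} have rank-k SVD M = X S Yᵀ, and let U ∈ R^{d₁×k} be a balanced factor, U = W_U D^{1/2}, of a pair (U,V) with U Vᵀ = W_U D W_Vᵀ (SVD). If ||M - U Vᵀ||_F ≤ σ_k(M)/10, then the principal-angle bound ||X_⊥ᵀ W_U||² ≤ 1/9 holds, where X_⊥ is an orthonormal basis for the orthogonal complement of the column span of X. -/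
open Matrix

section helpers
open scoped Matrix.Norms.L2Operator
variable {m n p : ℕ}

lemma spec_eq_norm (A : Matrix (Fin m) (Fin n) ℝ) : spec A = ‖A‖ := rfl

lemma spec_nonneg (A : Matrix (Fin m) (Fin n) ℝ) : 0 ≤ spec A := norm_nonneg _

lemma spec_mul_le (A : Matrix (Fin m) (Fin n) ℝ) (B : Matrix (Fin n) (Fin p) ℝ) :
    spec (A * B) ≤ spec A * spec B := Matrix.l2_opNorm_mul A B

lemma spec_transpose (A : Matrix (Fin m) (Fin n) ℝ) : spec Aᵀ = spec A := by
  rw [spec_eq_norm, spec_eq_norm, ← conjTranspose_eq_transpose_of_trivial]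
  exact Matrix.l2_opNorm_conjTranspose A

lemma spec_apply_le (A : Matrix (Fin m) (Fin n) ℝ) (x : EuclideanSpace ℝ (Fin n)) :
    ‖Matrix.toEuclideanLin A x‖ ≤ spec A * ‖x‖ :=
  (LinearMap.toContinuousLinearMap (Matrix.toEuclideanLin A)).le_opNorm x

lemma tE_mul (A : Matrix (Fin m) (Fin n) ℝ) (B : Matrix (Fin n) (Fin p) ℝ)
    (x : EuclideanSpace ℝ (Fin p)) :
    Matrix.toEuclideanLin (A * B) x = Matrix.toEuclideanLin A (Matrix.toEuclideanLin B x) := by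
  simp [Matrix.toEuclideanLin_apply, Matrix.mulVec_mulVec]

lemma tE_one (x : EuclideanSpace ℝ (Fin n)) :
    Matrix.toEuclideanLin (1 : Matrix (Fin n) (Fin n) ℝ) x = x := by
  simp [Matrix.toEuclideanLin_apply]

lemma tE_norm_sq (A : Matrix (Fin m) (Fin n) ℝ) (x : EuclideanSpace ℝ (Fin n)) :
    ‖Matrix.toEuclideanLin A x‖^2 = inner ℝ x (Matrix.toEuclideanLin (Aᵀ * A) x) := by
  rw [tE_mul, ← conjTranspose_eq_transpose_of_trivial,
    Matrix.toEuclideanLin_conjTranspose_eq_adjoint, LinearMap.adjoint_inner_right,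
    real_inner_self_eq_norm_sq]

lemma tE_norm_orth {A : Matrix (Fin m) (Fin n) ℝ} (h : Aᵀ * A = 1)
    (x : EuclideanSpace ℝ (Fin n)) : ‖Matrix.toEuclideanLin A x‖ = ‖x‖ := by
  have h1 := tE_norm_sq A x
  rw [h, tE_one, real_inner_self_eq_norm_sq] at h1
  have h2 := norm_nonneg (Matrix.toEuclideanLin A x)
  have h3 := norm_nonneg x
  nlinarith

lemma spec_le_one {A : Matrix (Fin m) (Fin n) ℝ} (h : Aᵀ * A = 1) : spec A ≤ 1 := by
  refine ContinuousLinearMap.opNorm_le_bound _ zero_le_one fun x => ?_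
  rw [one_mul]
  exact le_of_eq (tE_norm_orth h x)

lemma euclid_norm_eq (x : EuclideanSpace ℝ (Fin n)) : ‖x‖ = Real.sqrt (∑ i, (x i)^2) := by
  rw [EuclideanSpace.norm_eq]
  congr 1
  exact Finset.sum_congr rfl fun i _ => by rw [Real.norm_eq_abs, sq_abs]

lemma tE_apply_coord (A : Matrix (Fin m) (Fin n) ℝ) (x : EuclideanSpace ℝ (Fin n)) (i : Fin m) :
    Matrix.toEuclideanLin A x i = ∑ j, A i j * x j := rfl

lemma spec_le_frob (A : Matrix (Fin m) (Fin n) ℝ) : spec A ≤ frob A := by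
  refine ContinuousLinearMap.opNorm_le_bound _ (Real.sqrt_nonneg _) fun x => ?_
  show ‖Matrix.toEuclideanLin A x‖ ≤ frob A * ‖x‖
  have hx : ‖x‖ = Real.sqrt (∑ j, (x j)^2) := euclid_norm_eq x
  have h1 : ‖Matrix.toEuclideanLin A x‖ = Real.sqrt (∑ i, (Matrix.toEuclideanLin A x i)^2) :=
    euclid_norm_eq _
  rw [h1, hx, frob, ← Real.sqrt_mul (by positivity)]
  apply Real.sqrt_le_sqrt
  rw [Finset.sum_mul]
  refine Finset.sum_le_sum fun i _ => ?_
  rw [tE_apply_coord]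
  exact Finset.sum_mul_sq_le_sq_mul_sq Finset.univ (fun j => A i j) (fun j => x j)

lemma tE_diag_coord (d : Fin n → ℝ) (x : EuclideanSpace ℝ (Fin n)) (i : Fin n) :
    Matrix.toEuclideanLin (Matrix.diagonal d) x i = d i * x i := by
  rw [tE_apply_coord]
  simp [Matrix.diagonal, Finset.sum_ite_eq' Finset.univ i (fun j => d i * x j)]

lemma tE_diag_le {d : Fin n → ℝ} {c : ℝ} (hc : 0 ≤ c) (h : ∀ i, |d i| ≤ c)
    (x : EuclideanSpace ℝ (Fin n)) :
    ‖Matrix.toEuclideanLin (Matrix.diagonal d) x‖ ≤ c * ‖x‖ := by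
  rw [euclid_norm_eq, euclid_norm_eq, ← Real.sqrt_sq hc, ← Real.sqrt_mul (by positivity),
    ]
  apply Real.sqrt_le_sqrt
  rw [Finset.mul_sum]
  refine Finset.sum_le_sum fun i _ => ?_
  rw [tE_diag_coord]
  have h2 : d i ^ 2 ≤ c ^ 2 := sq_le_sq' (by linarith [(abs_le.mp (h i)).1]) (abs_le.mp (h i)).2
  nlinarith [sq_nonneg (x i)]

lemma spec_diag_le {d : Fin n → ℝ} {c : ℝ} (hc : 0 ≤ c) (h : ∀ i, |d i| ≤ c) :
    spec (Matrix.diagonal d) ≤ c :=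
  ContinuousLinearMap.opNorm_le_bound _ hc fun x => tE_diag_le hc h x

lemma tE_diag_ge {d : Fin n → ℝ} {c : ℝ} (hc : 0 ≤ c) (h : ∀ i, c ≤ d i)
    (x : EuclideanSpace ℝ (Fin n)) :
    c * ‖x‖ ≤ ‖Matrix.toEuclideanLin (Matrix.diagonal d) x‖ := by
  rw [euclid_norm_eq, euclid_norm_eq, ← Real.sqrt_sq hc, ← Real.sqrt_mul (by positivity)]
  apply Real.sqrt_le_sqrt
  rw [Finset.mul_sum]
  refine Finset.sum_le_sum fun i _ => ?_
  rw [tE_diag_coord]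
  have h2 : c ^ 2 ≤ d i ^ 2 := by nlinarith [h i]
  nlinarith [sq_nonneg (x i)]

end helpers

lemma frob_sub_comm {m n : ℕ} (A B : Matrix (Fin m) (Fin n) ℝ) :
    frob (A - B) = frob (B - A) := by
  have : ∀ i j, ((A - B) i j)^2 = ((B - A) i j)^2 := by
    intro i j; simp only [Matrix.sub_apply]; ring
  simp only [frob, this]

set_option maxHeartbeats 1000000 in
/-- Principal-angle bound ‖X_⊥ᵀ W_U‖² ≤ 1/9 in the local region. -/
theorem local_principal_angle_asym {d₁ d₂ k : ℕ} (hk : 0 < k)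
    (X : Matrix (Fin d₁) (Fin k) ℝ) (Y : Matrix (Fin d₂) (Fin k) ℝ) (S : Fin k → ℝ)
    (hX : Xᵀ * X = 1) (hY : Yᵀ * Y = 1) (hS : ∀ i, 0 < S i)
    (M : Matrix (Fin d₁) (Fin d₂) ℝ) (hM : M = X * Matrix.diagonal S * Yᵀ)
    (Xperp : Matrix (Fin d₁) (Fin (d₁ - k)) ℝ)
    (hXp : Xperpᵀ * Xperp = 1) (hXXp : Xᵀ * Xperp = 0)
    (WU : Matrix (Fin d₁) (Fin k) ℝ) (WV : Matrix (Fin d₂) (Fin k) ℝ) (s : Fin k → ℝ)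
    (hWU : WUᵀ * WU = 1) (hWV : WVᵀ * WV = 1) (hs : ∀ i, 0 ≤ s i)
    (U : Matrix (Fin d₁) (Fin k) ℝ) (V : Matrix (Fin d₂) (Fin k) ℝ)
    (hU : U = WU * Matrix.diagonal s) (hV : V = WV * Matrix.diagonal s)
    (hclose : frob (M - U * Vᵀ) ≤ (⨅ i, S i) / 10) :
    (spec (Xperpᵀ * WU))^2 ≤ 1/9 := by
  classical
  haveI : Nonempty (Fin k) := ⟨⟨0, hk⟩⟩
  set σ : ℝ := ⨅ i, S i with hσdef
  have hσ_le : ∀ i, σ ≤ S i := fun i => ciInf_le (Finite.bddBelow_range S) i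
  have hσpos : 0 < σ := by
    obtain ⟨j₀, _, hj₀⟩ := Finset.exists_min_image Finset.univ S ⟨⟨0, hk⟩, Finset.mem_univ _⟩
    exact lt_of_lt_of_le (hS j₀) (le_ciInf fun i => hj₀ i (Finset.mem_univ i))
  -- U Vᵀ in SVD form
  have hUV : U * Vᵀ = WU * Matrix.diagonal (fun i => s i ^ 2) * WVᵀ := by
    rw [hU, hV, Matrix.transpose_mul, Matrix.diagonal_transpose]
    rw [Matrix.mul_assoc, ← Matrix.mul_assoc (Matrix.diagonal s), Matrix.diagonal_mul_diagonal,
      ← Matrix.mul_assoc]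
    congr 1
    · congr 1
      congr 1
      funext i
      ring
  have hfrobE : frob (U * Vᵀ - M) ≤ σ / 10 := by
    rw [frob_sub_comm]; exact hclose
  have hspecE : spec (U * Vᵀ - M) ≤ σ / 10 := (spec_le_frob _).trans hfrobE
  -- Step A : lower bound on s j ^ 2
  have stepA : ∀ j, 9/10 * σ ≤ s j ^ 2 := by
    intro j
    set T : Submodule ℝ (EuclideanSpace ℝ (Fin d₂)) :=
      LinearMap.range (Matrix.toEuclideanLin Y) with hT
    set wcol : Fin k → EuclideanSpace ℝ (Fin d₂) :=
      fun i => Matrix.toEuclideanLin WV (EuclideanSpace.single i (1:ℝ)) with hwcol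
    set Kspan : Submodule ℝ (EuclideanSpace ℝ (Fin d₂)) :=
      Submodule.span ℝ (((Finset.univ.erase j).image wcol : Finset _) :
        Set (EuclideanSpace ℝ (Fin d₂))) with hKspan
    have hYinj : Function.Injective (Matrix.toEuclideanLin Y) := by
      intro a b hab
      have h1 := tE_norm_orth hY (a - b)
      rw [map_sub, hab, sub_self, norm_zero] at h1
      exact sub_eq_zero.mp (norm_eq_zero.mp h1.symm)
    have hTrank : Module.finrank ℝ T = k := by
      rw [hT, LinearMap.finrank_range_of_inj hYinj, finrank_euclideanSpace_fin]
    have hKspanrank : Module.finrank ℝ Kspan ≤ k - 1 := by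
      refine (finrank_span_finset_le_card _).trans ?_
      refine (Finset.card_image_le).trans ?_
      rw [Finset.card_erase_of_mem (Finset.mem_univ j), Finset.card_univ, Fintype.card_fin]
    have horth : Module.finrank ℝ Kspan + Module.finrank ℝ Kspanᗮ = d₂ := by
      rw [Submodule.finrank_add_finrank_orthogonal, finrank_euclideanSpace_fin]
    have hsup := Submodule.finrank_sup_add_finrank_inf_eq T Kspanᗮ
    have hle : Module.finrank ℝ ↥(T ⊔ Kspanᗮ) ≤ d₂ := by
      have := Submodule.finrank_le (T ⊔ Kspanᗮ)
      rwa [finrank_euclideanSpace_fin] at this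
    have hpos : 0 < Module.finrank ℝ ↥(T ⊓ Kspanᗮ) := by omega
    have hne : T ⊓ Kspanᗮ ≠ ⊥ := by
      intro h
      rw [h, finrank_bot] at hpos
      omega
    obtain ⟨x, hx, hx0⟩ := Submodule.exists_mem_ne_zero_of_ne_bot hne
    obtain ⟨c, hc⟩ := hx.1
    have hxnorm : (0:ℝ) < ‖x‖ := norm_pos_iff.mpr hx0
    -- lower bound ‖M x‖
    have hMx : σ * ‖x‖ ≤ ‖Matrix.toEuclideanLin M x‖ := by
      have h1 : Matrix.toEuclideanLin M x
          = Matrix.toEuclideanLin X (Matrix.toEuclideanLin (Matrix.diagonal S) c) := by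
        rw [← hc, ← tE_mul, ← tE_mul]
        congr 1
        rw [hM, Matrix.mul_assoc (X * Matrix.diagonal S) Yᵀ Y, hY, Matrix.mul_one]
      have hcx : ‖c‖ = ‖x‖ := by rw [← hc, tE_norm_orth hY]
      rw [h1, tE_norm_orth hX, ← hcx]
      exact tE_diag_ge hσpos.le hσ_le c
    -- upper bound ‖UVᵀ x‖
    set w : EuclideanSpace ℝ (Fin k) := Matrix.toEuclideanLin WVᵀ x with hw
    have hw0 : ∀ i, i ≠ j → w i = 0 := by
      intro i hij
      have hmem : wcol i ∈ Kspan := by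
        apply Submodule.subset_span
        simp only [Finset.coe_image, Set.mem_image, Finset.mem_coe, Finset.mem_erase]
        exact ⟨i, ⟨hij, Finset.mem_univ i⟩, rfl⟩
      have hinner := (Submodule.mem_orthogonal Kspan x).mp hx.2 _ hmem
      have hadj : (inner ℝ (wcol i) x : ℝ) = w i := by
        rw [hwcol]
        rw [← LinearMap.adjoint_inner_right (Matrix.toEuclideanLin WV)
          (EuclideanSpace.single i (1:ℝ)) x]
        rw [← Matrix.toEuclideanLin_conjTranspose_eq_adjoint,
          conjTranspose_eq_transpose_of_trivial]
        rw [EuclideanSpace.inner_single_left]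
        simp [hw]
      rw [hadj] at hinner
      exact hinner
    have hdw : Matrix.toEuclideanLin (Matrix.diagonal (fun i => s i ^ 2)) w
        = (s j ^ 2) • w := by
      refine PiLp.ext fun i => ?_
      rw [tE_diag_coord]
      by_cases hij : i = j
      · subst hij; rfl
      · simp [hw0 i hij, PiLp.smul_apply]
    have hUVx : ‖Matrix.toEuclideanLin (U * Vᵀ) x‖ ≤ s j ^ 2 * ‖x‖ := by
      have h2 : Matrix.toEuclideanLin (U * Vᵀ) x
          = Matrix.toEuclideanLin WU ((s j ^ 2) • w) := by
        rw [hUV, tE_mul, tE_mul, ← hw, hdw]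
      rw [h2, _root_.map_smul, norm_smul, tE_norm_orth hWU]
      have hwx : ‖w‖ ≤ ‖x‖ := by
        have := spec_apply_le WVᵀ x
        rw [spec_transpose] at this
        calc ‖w‖ ≤ spec WV * ‖x‖ := this
          _ ≤ 1 * ‖x‖ := mul_le_mul_of_nonneg_right (spec_le_one hWV) (norm_nonneg x)
          _ = ‖x‖ := one_mul _
      have habs : ‖(s j ^ 2 : ℝ)‖ = s j ^ 2 := by
        rw [Real.norm_eq_abs, abs_of_nonneg (sq_nonneg _)]
      rw [habs]
      exact mul_le_mul_of_nonneg_left hwx (sq_nonneg _)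
    have hEx : ‖Matrix.toEuclideanLin (U * Vᵀ - M) x‖ ≤ σ/10 * ‖x‖ :=
      (spec_apply_le _ _).trans (mul_le_mul_of_nonneg_right hspecE (norm_nonneg x))
    have htri : ‖Matrix.toEuclideanLin M x‖
        ≤ ‖Matrix.toEuclideanLin (U * Vᵀ - M) x‖ + ‖Matrix.toEuclideanLin (U * Vᵀ) x‖ := by
      have : Matrix.toEuclideanLin M x
          = Matrix.toEuclideanLin (U * Vᵀ) x - Matrix.toEuclideanLin (U * Vᵀ - M) x := by
        rw [map_sub]; simp
      rw [this]
      exact (norm_sub_le _ _).trans (by rw [add_comm])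
    have hchain : σ * ‖x‖ ≤ (σ/10 + s j ^ 2) * ‖x‖ := by
      rw [add_mul]
      linarith
    have h9 : σ ≤ σ/10 + s j ^ 2 := le_of_mul_le_mul_right hchain hxnorm
    linarith
  -- Step B
  have hspos : ∀ i, (0:ℝ) < s i ^ 2 := fun i => lt_of_lt_of_le (by nlinarith) (stepA i)
  have hBD : Xperpᵀ * (U * Vᵀ - M) * WV
      = (Xperpᵀ * WU) * Matrix.diagonal (fun i => s i ^ 2) := by
    have hXpX : Xperpᵀ * X = 0 := by
      have := congrArg Matrix.transpose hXXp
      rwa [Matrix.transpose_mul, Matrix.transpose_transpose, Matrix.transpose_zero] at this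
    have hXpM : Xperpᵀ * M = 0 := by
      rw [hM, ← Matrix.mul_assoc, ← Matrix.mul_assoc, hXpX, Matrix.zero_mul, Matrix.zero_mul]
    rw [Matrix.mul_sub, hXpM, sub_zero, hUV]
    simp only [← Matrix.mul_assoc]
    rw [Matrix.mul_assoc _ WVᵀ WV, hWV, Matrix.mul_one]
  have hdinv : Matrix.diagonal (fun i => s i ^ 2) * Matrix.diagonal (fun i => (s i ^ 2)⁻¹)
      = (1 : Matrix (Fin k) (Fin k) ℝ) := by
    rw [Matrix.diagonal_mul_diagonal,
      show (fun i => s i ^ 2 * (s i ^ 2)⁻¹) = fun _ : Fin k => (1:ℝ) from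
        funext fun i => mul_inv_cancel₀ (ne_of_gt (hspos i)),
      Matrix.diagonal_one]
  have hfact : Xperpᵀ * WU
      = (Xperpᵀ * WU * Matrix.diagonal (fun i => s i ^ 2))
        * Matrix.diagonal (fun i => (s i ^ 2)⁻¹) := by
    rw [Matrix.mul_assoc (Xperpᵀ * WU), hdinv, Matrix.mul_one]
  have h1 : spec (Xperpᵀ * WU * Matrix.diagonal (fun i => s i ^ 2)) ≤ σ/10 := by
    rw [← hBD]
    calc spec (Xperpᵀ * (U * Vᵀ - M) * WV)
        ≤ spec (Xperpᵀ * (U * Vᵀ - M)) * spec WV := spec_mul_le _ _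
      _ ≤ spec (Xperpᵀ * (U * Vᵀ - M)) * 1 :=
          mul_le_mul_of_nonneg_left (spec_le_one hWV) (spec_nonneg _)
      _ = spec (Xperpᵀ * (U * Vᵀ - M)) := mul_one _
      _ ≤ spec Xperpᵀ * spec (U * Vᵀ - M) := spec_mul_le _ _
      _ ≤ 1 * (σ/10) := by
          apply mul_le_mul _ hspecE (spec_nonneg _) zero_le_one
          rw [spec_transpose]
          exact spec_le_one hXp
      _ = σ/10 := one_mul _
  have h2 : spec (Matrix.diagonal (fun i => (s i ^ 2)⁻¹)) ≤ (9/10 * σ)⁻¹ := by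
    apply spec_diag_le (by positivity)
    intro i
    rw [abs_of_pos (inv_pos.mpr (hspos i))]
    exact inv_anti₀ (by positivity) (stepA i)
  have hspecB : spec (Xperpᵀ * WU) ≤ σ/10 * (9/10 * σ)⁻¹ := by
    calc spec (Xperpᵀ * WU)
        = spec ((Xperpᵀ * WU * Matrix.diagonal (fun i => s i ^ 2))
            * Matrix.diagonal (fun i => (s i ^ 2)⁻¹)) := by rw [← hfact]
      _ ≤ spec (Xperpᵀ * WU * Matrix.diagonal (fun i => s i ^ 2))
            * spec (Matrix.diagonal (fun i => (s i ^ 2)⁻¹)) := spec_mul_le _ _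
      _ ≤ σ/10 * (9/10 * σ)⁻¹ := by
          apply mul_le_mul h1 h2 (spec_nonneg _) (by positivity)
  have hval : σ/10 * (9/10 * σ)⁻¹ = 1/9 := by
    field_simp
  rw [hval] at hspecB
  nlinarith [spec_nonneg (Xperpᵀ * WU)]
end
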